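/- arXiv:2111.07732 — 2 statements merged into one kernel-verified Lean document; each statement's English description precedes it below -/
import Mathlib

section
/- For all natural numbers g and n with n ≥ 1 and 3·2^(n−1) ≤ g ≤ 3·2^n, there exists a finite simple graph T that is a tree (connected and acyclic) in which every vertex has degree 1 or degree 3, with exactly g vertices of degree 1 (leaves), and there exists a vertex O of T such that the graph distance from O to every leaf is at least n. -/
/-!
Number the vertices of the infinite tree in which the root `0` has children `1, 2, 3` and every
`v ≥ 1` has children `2v + 2, 2v + 3` breadth-first. Its first `2k + 2` vertices span a finite
trivalent tree whose leaves are exactly `k, …, 2k + 1`, so it has `k + 2` leaves. Since a vertex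
is at most doubled (plus three) along an edge, a walk of length `ℓ` from the root only reaches
vertices `v` with `v + 3 ≤ 3 · 2 ^ ℓ`; with `k + 2 = g ≥ 3 · 2 ^ (n - 1)` every leaf is therefore
at distance at least `n` from the root.
-/

namespace SimpleGraph

variable {V : Type*}

def parentGraph (f : V → V) : SimpleGraph V := fromRel fun u v => u = f v

variable {f : V → V}

lemma parentGraph_adj {u v : V} : (parentGraph f).Adj u v ↔ u ≠ v ∧ (u = f v ∨ v = f u) :=
  fromRel_adj ..

section rank

variable (rank : V → ℕ) {r : V}

lemma parentGraph_adj_self_of_ne (hf : ∀ v ≠ r, rank (f v) < rank v) {v : V} (hv : v ≠ r) :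
    (parentGraph f).Adj v (f v) :=
  parentGraph_adj.2 ⟨fun h => (hf v hv).ne (congrArg rank h.symm), Or.inr rfl⟩

lemma parentGraph_reachable_root (hf : ∀ v ≠ r, rank (f v) < rank v) (v : V) :
    (parentGraph f).Reachable v r := by
  induction h : rank v using Nat.strong_induction_on generalizing v with
  | _ k ih =>
    by_cases hv : v = r
    · exact hv ▸ Reachable.refl v
    · exact (parentGraph_adj_self_of_ne rank hf hv).reachable.trans
        (ih _ (h ▸ hf v hv) _ rfl)

lemma parentGraph_connected (hf : ∀ v ≠ r, rank (f v) < rank v) : (parentGraph f).Connected :=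
  (connected_iff_exists_forall_reachable _).2
    ⟨r, fun v => (parentGraph_reachable_root rank hf v).symm⟩

lemma parentGraph_isTree [Finite V] (hr : f r = r) (hf : ∀ v ≠ r, rank (f v) < rank v) :
    (parentGraph f).IsTree := by
  refine isTree_iff_connected_and_card.2 ⟨parentGraph_connected rank hf, ?_⟩
  let e : {v // v ≠ r} → (parentGraph f).edgeSet := fun v =>
    ⟨s(v, f v), parentGraph_adj_self_of_ne rank hf v.2⟩
  have he : e.Bijective := by
    constructor
    · rintro ⟨v, hv⟩ ⟨w, hw⟩ hvw
      rcases Sym2.eq_iff.1 (Subtype.ext_iff.1 hvw) with ⟨rfl, -⟩ | ⟨rfl, hwv⟩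
      · rfl
      · have hlt := (hf _ hw).trans (hwv ▸ hf _ hv)
        exact absurd hlt (lt_irrefl _)
    · rintro ⟨e, he⟩
      induction e using Sym2.ind with
      | _ a b =>
      obtain ⟨hab, hba | hab'⟩ : a ≠ b ∧ (a = f b ∨ b = f a) := parentGraph_adj.1 he
      · refine ⟨⟨b, ?_⟩, Subtype.ext (by simp [e, hba])⟩
        rintro rfl
        exact hab (hba.trans hr)
      · refine ⟨⟨a, ?_⟩, Subtype.ext (by simp [e, hab'])⟩
        rintro rfl
        exact hab (hr.symm.trans hab'.symm)
  rw [← Nat.card_congr (Equiv.ofBijective e he), ← Set.ncard_add_ncard_compl {r},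
    Set.ncard_singleton, add_comm, ← Nat.card_coe_set_eq]
  rfl

end rank

/-- Truncated subtraction makes `0` its own parent and `1, 2, 3` its children. -/
def heapParent (k : ℕ) (v : Fin (2 * k + 2)) : Fin (2 * k + 2) := ⟨(v - 2) / 2, by omega⟩

def trivalentTree (k : ℕ) : SimpleGraph (Fin (2 * k + 2)) := parentGraph (heapParent k)

variable {k : ℕ}

lemma trivalentTree_adj {u v : Fin (2 * k + 2)} :
    (trivalentTree k).Adj u v ↔ u ≠ v ∧ ((u : ℕ) = (v - 2) / 2 ∨ (v : ℕ) = (u - 2) / 2) := by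
  simp [trivalentTree, parentGraph_adj, heapParent, Fin.ext_iff]

lemma trivalentTree_isTree (k : ℕ) : (trivalentTree k).IsTree :=
  parentGraph_isTree Fin.val (r := 0) (Fin.ext (by simp [heapParent])) fun v hv => by
    have hv0 : (v : ℕ) ≠ 0 := fun h => hv (Fin.ext h)
    simp only [heapParent]
    omega

lemma image_val_neighborSet_trivalentTree (v : Fin (2 * k + 2)) :
    Fin.val '' (trivalentTree k).neighborSet v =
      {w | w < 2 * k + 2 ∧ w ≠ v ∧ (w = (v - 2) / 2 ∨ (v : ℕ) = (w - 2) / 2)} := by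
  ext w
  constructor
  · rintro ⟨w, hw, rfl⟩
    obtain ⟨hne, h⟩ := trivalentTree_adj.1 hw
    exact ⟨w.2, Fin.val_ne_of_ne hne.symm, h.symm⟩
  · rintro ⟨hw, hne, h⟩
    exact ⟨⟨w, hw⟩, trivalentTree_adj.2 ⟨fun h' => hne (congrArg Fin.val h').symm, h.symm⟩, rfl⟩

lemma ncard_neighborSet_trivalentTree (hk : 1 ≤ k) (v : Fin (2 * k + 2)) :
    ((trivalentTree k).neighborSet v).ncard = if (v : ℕ) < k then 3 else 1 := by
  rw [← Set.ncard_image_of_injective _ Fin.val_injective, image_val_neighborSet_trivalentTree]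
  obtain ⟨a, ha⟩ := v
  dsimp only
  split_ifs with hv
  · obtain rfl | h0 := eq_or_ne a 0
    · exact Set.ncard_eq_three.2 ⟨1, 2, 3, by decide, by decide, by decide, by
        ext w
        simp only [Set.mem_ofPred_eq, Set.mem_insert_iff, Set.mem_singleton_iff]
        omega⟩
    · refine Set.ncard_eq_three.2
        ⟨(a - 2) / 2, 2 * a + 2, 2 * a + 3, by omega, by omega, by omega, ?_⟩
      ext w
      simp only [Set.mem_ofPred_eq, Set.mem_insert_iff, Set.mem_singleton_iff]
      omega
  · refine Set.ncard_eq_one.2 ⟨(a - 2) / 2, ?_⟩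
    ext w
    simp only [Set.mem_ofPred_eq, Set.mem_singleton_iff]
    omega

lemma ncard_leaves_trivalentTree (hk : 1 ≤ k) :
    {v | ((trivalentTree k).neighborSet v).ncard = 1}.ncard = k + 2 := by
  simp_rw [ncard_neighborSet_trivalentTree hk]
  rw [show {v : Fin (2 * k + 2) | (if (v : ℕ) < k then 3 else 1) = 1} = Set.Ici ⟨k, by omega⟩ by
    ext v
    simp only [Set.mem_ofPred_eq, Set.mem_Ici, Fin.le_def]
    split_ifs <;> omega]
  rw [← Finset.coe_Ici, Set.ncard_coe_finset, Fin.card_Ici, Fin.val_mk]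
  omega

lemma val_add_three_le_of_walk_trivalentTree {u v : Fin (2 * k + 2)}
    (p : (trivalentTree k).Walk u v) :
    (v : ℕ) + 3 ≤ (u + 3) * 2 ^ p.length := by
  induction p with
  | nil => simp
  | @cons u w v hadj _ ih =>
    have hw : (w : ℕ) + 3 ≤ 2 * (u + 3) := by
      rcases (trivalentTree_adj.1 hadj).2 with h | h <;> omega
    calc (v : ℕ) + 3 ≤ (w + 3) * 2 ^ _ := ih
      _ ≤ 2 * (u + 3) * 2 ^ _ := Nat.mul_le_mul_right _ hw
      _ = (u + 3) * 2 ^ (Walk.cons hadj _).length := by rw [Walk.length_cons, pow_succ]; ring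

lemma val_add_three_le_dist_trivalentTree (v : Fin (2 * k + 2)) :
    (v : ℕ) + 3 ≤ 3 * 2 ^ (trivalentTree k).dist 0 v := by
  obtain ⟨p, hp⟩ := (trivalentTree_isTree k).1.exists_walk_length_eq_dist 0 v
  simpa [hp] using val_add_three_le_of_walk_trivalentTree p

end SimpleGraph

theorem stmt_4_general (g n : ℕ) (hg1 : 3 * 2 ^ (n - 1) ≤ g) :
    ∃ (V : Type) (_ : Finite V) (T : SimpleGraph V),
      T.IsTree
      ∧ (∀ v, (T.neighborSet v).ncard = 1 ∨ (T.neighborSet v).ncard = 3)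
      ∧ {v | (T.neighborSet v).ncard = 1}.ncard = g
      ∧ ∃ O, ∀ v, (T.neighborSet v).ncard = 1 → n ≤ T.dist O v := by
  have hpos := Nat.one_le_two_pow (n := n - 1)
  obtain ⟨k, rfl⟩ : ∃ k, g = k + 2 := ⟨g - 2, by omega⟩
  have hk : 1 ≤ k := by omega
  refine ⟨Fin (2 * k + 2), inferInstance, SimpleGraph.trivalentTree k,
    SimpleGraph.trivalentTree_isTree k, fun v => ?_,
    SimpleGraph.ncard_leaves_trivalentTree hk, 0, fun v hv => ?_⟩
  · rw [SimpleGraph.ncard_neighborSet_trivalentTree hk]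
    split_ifs <;> simp
  · rw [SimpleGraph.ncard_neighborSet_trivalentTree hk] at hv
    have hkv : k ≤ v := by split_ifs at hv <;> omega
    have hv3 := SimpleGraph.val_add_three_le_dist_trivalentTree v
    have hpow : 2 ^ (n - 1) < 2 ^ (SimpleGraph.trivalentTree k).dist 0 v := by omega
    have hlt := (Nat.pow_lt_pow_iff_right (by norm_num)).1 hpow
    omega

theorem stmt_4 (g n : ℕ) (hn : 1 ≤ n) (hg1 : 3 * 2 ^ (n - 1) ≤ g) (hg2 : g ≤ 3 * 2 ^ n) :
    ∃ (V : Type) (_ : Finite V) (T : SimpleGraph V),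
      T.IsTree
      ∧ (∀ v, (T.neighborSet v).ncard = 1 ∨ (T.neighborSet v).ncard = 3)
      ∧ {v | (T.neighborSet v).ncard = 1}.ncard = g
      ∧ ∃ O, ∀ v, (T.neighborSet v).ncard = 1 → n ≤ T.dist O v :=
  stmt_4_general g n hg1
end

section
/- For every natural number g ≥ 2, arccosh( cos(π/(2g+2)) / sin(π/(2g+2)) ) < log( (4g+4)/π ), where log is the natural logarithm and arccosh the inverse hyperbolic cosine. -/
/-- The inverse hyperbolic cosine, `arccosh x = log (x + √(x² - 1))` for `x ≥ 1`. -/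
noncomputable def arccosh (x : ℝ) : ℝ := Real.log (x + Real.sqrt (x ^ 2 - 1))

open Real

theorem arccosh_lt_log_two_mul {x : ℝ} (hx : 0 < x) : arccosh x < log (2 * x) := by
  have hsqrt : √(x ^ 2 - 1) < x := (sqrt_lt' hx).2 (by linarith)
  exact log_lt_log (by positivity) (by linarith)

theorem cos_div_sin_lt_inv {t : ℝ} (ht0 : 0 < t) (ht : t < π / 2) : cos t / sin t < t⁻¹ := by
  have hcos : 0 < cos t := cos_pos_of_mem_Ioo ⟨by linarith, ht⟩
  have hsin : 0 < sin t := sin_pos_of_pos_of_lt_pi ht0 (by linarith)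
  have htan : t < sin t / cos t := tan_eq_sin_div_cos t ▸ lt_tan ht0 ht
  rw [div_lt_iff₀ hsin, ← div_eq_inv_mul, lt_div_iff₀ ht0]
  rw [lt_div_iff₀ hcos] at htan
  linarith

theorem arccosh_cos_div_sin_lt_log {t : ℝ} (ht0 : 0 < t) (ht : t < π / 2) :
    arccosh (cos t / sin t) < log (2 / t) := by
  have hcot : 0 < cos t / sin t :=
    div_pos (cos_pos_of_mem_Ioo ⟨by linarith, ht⟩) (sin_pos_of_pos_of_lt_pi ht0 (by linarith))
  calc arccosh (cos t / sin t) < log (2 * (cos t / sin t)) := arccosh_lt_log_two_mul hcot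
    _ < log (2 / t) := by
      rw [div_eq_mul_inv 2 t]
      gcongr
      exact cos_div_sin_lt_inv ht0 ht

theorem stmt_9 (g : ℕ) (hg : 2 ≤ g) :
    arccosh (Real.cos (Real.pi / (2 * g + 2)) / Real.sin (Real.pi / (2 * g + 2)))
      < Real.log ((4 * g + 4) / Real.pi) := by
  have hg' : (2 : ℝ) ≤ g := by exact_mod_cast hg
  have hden : (0 : ℝ) < 2 * g + 2 := by positivity
  have hlt : π / (2 * g + 2) < π / 2 := div_lt_div_of_pos_left pi_pos two_pos (by linarith)
  have hrhs : (4 * g + 4) / π = 2 / (π / (2 * g + 2)) := by field_simp; ring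
  rw [hrhs]
  exact arccosh_cos_div_sin_lt_log (div_pos pi_pos hden) hlt
end
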